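/- Let M ≥ 2 be an integer, let S be the (M−1)×(M−1) matrix with entries S_{jk} = sin(jkπ/M), and set O = √(2/M)·S. Then O is symmetric and O·O = I, i.e., O is an orthogonal involution. -/

import Mathlib

open Real Matrix

lemma re_aux (c : ℝ) (hc : Real.cos c ≠ 1) :
    ((-2 : ℂ) / (Complex.exp (c * Complex.I) - 1)).re = 1 := by
  rw [Complex.exp_mul_I]
  have hs := Real.sin_sq_add_cos_sq c
  have h2 : Real.cos c < 1 := lt_of_le_of_ne (Real.cos_le_one c) hc
  rw [Complex.div_re]
  simp [Complex.normSq_apply, Complex.cos_ofReal_re, Complex.sin_ofReal_re]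
  have hd : (Real.cos c - 1) * (Real.cos c - 1) + Real.sin c * Real.sin c = 2 - 2 * Real.cos c := by
    nlinarith
  rw [hd]
  have : (2 : ℝ) - 2 * Real.cos c ≠ 0 := by nlinarith
  field_simp
  ring

lemma sum_cos_eq (M : ℕ) (hM : 0 < M) (n : ℤ) (hne : ¬ ((2 * (M:ℤ)) ∣ n)) :
    ∑ j ∈ Finset.range M, Real.cos (j * ((n : ℝ) * π / M)) = if 2 ∣ n then 0 else 1 := by
  set c : ℝ := (n : ℝ) * π / M with hc
  have hM0 : (M : ℝ) ≠ 0 := Nat.cast_ne_zero.mpr hM.ne'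
  have hπ : π ≠ 0 := Real.pi_ne_zero
  have hcos : Real.cos c ≠ 1 := by
    intro h
    rcases (Real.cos_eq_one_iff c).mp h with ⟨m, hm⟩
    apply hne
    refine ⟨m, ?_⟩
    have h1 : (m : ℝ) * (2 * π) * M = (n : ℝ) * π := by
      rw [hm, hc]; field_simp
    have h2 : (n : ℝ) * π = ((2 * M * m : ℤ) : ℝ) * π := by push_cast; linarith
    have h3 : (n : ℝ) = ((2 * M * m : ℤ) : ℝ) := mul_right_cancel₀ hπ h2
    exact_mod_cast h3
  set z : ℂ := Complex.exp (c * Complex.I) with hz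
  have hz1 : z ≠ 1 := by
    intro h
    apply hcos
    have := congrArg Complex.re h
    rwa [hz, Complex.exp_ofReal_mul_I_re] at this
  have hzM : z ^ M = Complex.exp ((n : ℂ) * (π * Complex.I)) := by
    rw [hz, ← Complex.exp_nat_mul]
    congr 1
    rw [hc]
    have hM0' : (M:ℂ) ≠ 0 := Nat.cast_ne_zero.mpr hM.ne'
    push_cast
    field_simp
  have key : (∑ j ∈ Finset.range M, Real.cos (j * c))
      = ((z ^ M - 1) / (z - 1)).re := by
    rw [← geom_sum_eq hz1, Complex.re_sum]
    refine Finset.sum_congr rfl fun j _ => ?_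
    have hj : (z : ℂ) ^ j = Complex.exp (((j : ℝ) * c : ℝ) * Complex.I) := by
      rw [hz, ← Complex.exp_nat_mul]
      congr 1
      push_cast
      ring
    rw [hj, Complex.exp_ofReal_mul_I_re]
  rw [key]
  by_cases h2 : (2:ℤ) ∣ n
  · simp only [h2, if_true]
    obtain ⟨m, rfl⟩ := h2
    have : z ^ M = 1 := by
      rw [hzM]
      push_cast
      rw [show (2 * (m:ℂ)) * (π * Complex.I) = (m:ℂ) * (2 * π * Complex.I) by ring]
      exact Complex.exp_int_mul_two_pi_mul_I m
    rw [this]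
    simp
  · simp only [h2, if_false]
    have hodd : Odd n := Int.not_even_iff_odd.mp (by simpa [even_iff_two_dvd] using h2)
    have : z ^ M = -1 := by
      rw [hzM, show ((n:ℂ)) * (π * Complex.I) = (n : ℤ) * (π * Complex.I) by push_cast; ring,
        Complex.exp_int_mul, Complex.exp_pi_mul_I]
      exact Odd.neg_one_zpow hodd
    rw [this]
    rw [show ((-1 : ℂ) - 1) = -2 by ring]
    exact re_aux c hcos

lemma sin_prod_sum (M K L : ℕ) (hM : 2 ≤ M) (hK0 : 1 ≤ K) (hK : K ≤ M - 1)
    (hL0 : 1 ≤ L) (hL : L ≤ M - 1) :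
    ∑ j ∈ Finset.range M, Real.sin (j * K * π / M) * Real.sin (j * L * π / M)
      = if K = L then (M : ℝ) / 2 else 0 := by
  have hM0 : 0 < M := by omega
  set n1 : ℤ := (K : ℤ) - L with hn1
  set n2 : ℤ := (K : ℤ) + L with hn2
  have prod : ∀ x y : ℝ, Real.sin x * Real.sin y
      = (Real.cos (x - y) - Real.cos (x + y)) / 2 := by
    intro x y
    have h := Real.cos_sub_cos (x - y) (x + y)
    rw [show ((x-y)+(x+y))/2 = x by ring, show ((x-y)-(x+y))/2 = -y by ring,
      Real.sin_neg] at h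
    linarith
  have hterm : ∀ j : ℕ, Real.sin (j * K * π / M) * Real.sin (j * L * π / M)
      = (Real.cos (j * ((n1:ℝ) * π / M)) - Real.cos (j * ((n2:ℝ) * π / M))) / 2 := by
    intro j
    rw [prod]
    rw [show (j:ℝ) * K * π / M - j * L * π / M = j * ((n1:ℝ) * π / M) by
        rw [hn1]; push_cast; ring,
      show (j:ℝ) * K * π / M + j * L * π / M = j * ((n2:ℝ) * π / M) by
        rw [hn2]; push_cast; ring]
  have hsplit : ∑ j ∈ Finset.range M, Real.sin (j * K * π / M) * Real.sin (j * L * π / M)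
      = ((∑ j ∈ Finset.range M, Real.cos (j * ((n1:ℝ) * π / M)))
        - ∑ j ∈ Finset.range M, Real.cos (j * ((n2:ℝ) * π / M))) / 2 := by
    rw [Finset.sum_congr rfl fun j _ => hterm j, ← Finset.sum_div, Finset.sum_sub_distrib]
  have hnd2 : ¬ ((2 * (M:ℤ)) ∣ n2) := by
    intro h
    have hpos : 0 < n2 := by omega
    have := Int.le_of_dvd hpos h
    omega
  by_cases hKL : K = L
  · subst hKL
    rw [if_pos rfl, hsplit]
    have h1 : ∑ j ∈ Finset.range M, Real.cos (j * ((n1:ℝ) * π / M)) = M := by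
      have : (n1 : ℝ) = 0 := by rw [hn1]; push_cast; ring
      simp [this]
    have h2 : ∑ j ∈ Finset.range M, Real.cos (j * ((n2:ℝ) * π / M)) = 0 := by
      rw [sum_cos_eq M hM0 n2 hnd2, if_pos ⟨(K:ℤ), by omega⟩]
    rw [h1, h2]
    ring
  · rw [if_neg hKL, hsplit]
    have hne0 : n1 ≠ 0 := by omega
    have hnd1 : ¬ ((2 * (M:ℤ)) ∣ n1) := by
      intro h
      have := Int.le_of_dvd (abs_pos.mpr hne0) ((dvd_abs _ _).mpr h)
      have habs : |n1| < 2 * (M:ℤ) := abs_lt.mpr ⟨by omega, by omega⟩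
      omega
    rw [sum_cos_eq M hM0 n1 hnd1, sum_cos_eq M hM0 n2 hnd2]
    by_cases hp : (2:ℤ) ∣ n1
    · rw [if_pos hp, if_pos (by omega)]
      ring
    · rw [if_neg hp, if_neg (by omega)]
      ring



/-- For `M ≥ 2`, the normalized discrete sine transform matrix
`O = √(2/M)·S`, `S_{jk} = sin(jkπ/M)`, is a symmetric orthogonal involution:
`Oᵀ = O` and `O·O = 1`. -/
theorem dst_matrix_orthogonal_involution (M : ℕ) (hM : 2 ≤ M)
    (S O : Matrix (Fin (M - 1)) (Fin (M - 1)) ℝ)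
    (hS : ∀ j k : Fin (M - 1),
      S j k = Real.sin ((((j : ℕ) + 1) * ((k : ℕ) + 1) * π) / M))
    (hO : O = Real.sqrt (2 / M) • S) :
    O.transpose = O ∧ O * O = 1 := by
  have hM0 : (0:ℝ) < M := by positivity
  have hMne : (M:ℝ) ≠ 0 := hM0.ne'
  have hsq : Real.sqrt (2 / M) * Real.sqrt (2 / M) = 2 / M :=
    Real.mul_self_sqrt (by positivity)
  constructor
  · subst hO
    ext j k
    simp only [transpose_apply, Matrix.smul_apply, smul_eq_mul]
    rw [hS k j, hS j k]
    congr 2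
    ring
  · subst hO
    ext j k
    have hjlt : (j:ℕ) < M - 1 := j.isLt
    have hklt : (k:ℕ) < M - 1 := k.isLt
    set K : ℕ := (j:ℕ) + 1 with hKdef
    set L : ℕ := (k:ℕ) + 1 with hLdef
    have hentry : (Real.sqrt (2 / M) • S * Real.sqrt (2 / M) • S) j k
        = (2 / M) * ∑ i ∈ Finset.range (M - 1),
            Real.sin ((i + 1 : ℕ) * K * π / M) * Real.sin ((i + 1 : ℕ) * L * π / M) := by
      rw [Matrix.mul_apply, Finset.mul_sum,
        ← Fin.sum_univ_eq_sum_range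
          (fun i => (2 / (M:ℝ)) * (Real.sin ((i + 1 : ℕ) * K * π / M)
            * Real.sin ((i + 1 : ℕ) * L * π / M))) (M - 1)]
      refine Finset.sum_congr rfl fun i _ => ?_
      simp only [Matrix.smul_apply, smul_eq_mul]
      rw [hS j i, hS i k]
      rw [show ((((j:ℕ):ℝ) + 1) * (((i:ℕ):ℝ) + 1) * π / M)
          = ((((i:ℕ) + 1 : ℕ) : ℝ)) * K * π / M by simp only [hKdef]; push_cast; ring,
        show ((((i:ℕ):ℝ) + 1) * (((k:ℕ):ℝ) + 1) * π / M)
          = ((((i:ℕ) + 1 : ℕ) : ℝ)) * L * π / M by simp only [hLdef]; push_cast; ring]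
      rw [mul_mul_mul_comm, hsq]
    have hfull : ∑ i ∈ Finset.range (M - 1),
          Real.sin ((i + 1 : ℕ) * K * π / M) * Real.sin ((i + 1 : ℕ) * L * π / M)
        = ∑ i ∈ Finset.range M, Real.sin (i * K * π / M) * Real.sin (i * L * π / M) := by
      have hM1 : M - 1 + 1 = M := by omega
      have h := Finset.sum_range_succ'
        (fun i => Real.sin ((i:ℕ) * K * π / M) * Real.sin ((i:ℕ) * L * π / M)) (M - 1)
      rw [hM1] at h
      rw [h]
      simp
    rw [hentry, hfull, sin_prod_sum M K L hM (by omega) (by omega) (by omega) (by omega)]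
    by_cases hjk : j = k
    · subst hjk
      rw [if_pos rfl, Matrix.one_apply_eq]
      field_simp
    · have hKL : K ≠ L := by
        simp only [hKdef, hLdef]
        intro h
        exact hjk (Fin.ext (by omega))
      rw [if_neg hKL, Matrix.one_apply_ne hjk, mul_zero]
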